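/- Let Ω ⊂ ℝ^d be compact, μ a finite positive Borel measure on Ω, and {p_α : α ∈ ℕ^d} a family of real d-variate polynomials with deg p_α = |α| such that for every n the set {p_α : |α| ≤ n} is an orthonormal basis of Π_n^d(Ω) in L²(dμ). Suppose that for each n there is a finite node set X_n ⊂ Ω with positive weights w_ξ > 0 such that Σ_{ξ∈X_n} w_ξ q(ξ) = ∫_Ω q dμ for all q ∈ Π_{2n}^d(Ω). Let h ∈ L²(dμ) and define m_α = ∫_Ω h p_α dμ and λ_ξ = w_ξ Σ_{|α|≤n} p_α(ξ) m_α for ξ ∈ X_n. Then lim_{n→∞} Σ_{ξ∈X_n} |λ_ξ| = ∫_Ω |h(x)| dμ. -/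

import Mathlib

/-!
With `L_n h = ∑_{|α| ≤ n} m_α p_α`, the orthogonal projection of `h` onto `Π_n`, we have
`λ_ξ = w_ξ L_n h(ξ)`, so the sum is the cubature sum of `|L_n h|`. Approximate `h` in `L²(μ)`
by a polynomial `Q` (bounded continuous functions are dense, then Stone–Weierstrass on `Ω`).
For `n ≥ deg Q`, `L_n h` is at least as close to `h` as `Q`; since the rule is exact on
`(L_n h - Q)²`, of degree `≤ 2n`, and its weights are positive, the cubature sum of
`|L_n h - Q|` is `O(‖h - Q‖₂)`. The cubature sums of the continuous function `|Q|` tend to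
`∫ |Q|` (Stone–Weierstrass and positivity again), and `∫ |Q|` is within `O(‖h - Q‖₂)` of `∫ |h|`.
-/

open Real MeasureTheory Filter

/-- The index set `{α ∈ ℕ^d : |α| ≤ n}`. -/
def idxd (d n : ℕ) : Finset (Fin d → ℕ) :=
  (Fintype.piFinset fun _ : Fin d => Finset.range (n + 1)).filter (fun α => ∑ i, α i ≤ n)

open MvPolynomial

theorem MvPolynomial.exists_forall_abs_sub_lt_of_isCompact {ι : Type*} {K : Set (ι → ℝ)}
    (hK : IsCompact K) {f : (ι → ℝ) → ℝ} (hf : Continuous f) {ε : ℝ} (hε : 0 < ε) :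
    ∃ q : MvPolynomial ι ℝ, ∀ x ∈ K, |f x - eval x q| < ε := by
  let φ : MvPolynomial ι ℝ →ₐ[ℝ] C(ι → ℝ, ℝ) := aeval fun i => ⟨fun x => x i, continuous_apply i⟩
  have hφ (q : MvPolynomial ι ℝ) (x : ι → ℝ) : φ q x = eval x q := by
    induction q using MvPolynomial.induction_on with
    | C a => simp [φ]
    | add p q hp hq => simp [hp, hq]
    | mul_X p i hp => simp [hp, φ]
  have hsep : φ.range.SeparatesPoints := by
    intro x y hxy
    obtain ⟨i, hi⟩ := Function.ne_iff.mp hxy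
    exact ⟨_, ⟨φ (X i), ⟨X i, rfl⟩, rfl⟩, by simpa [hφ] using hi⟩
  obtain ⟨g, ⟨q, rfl⟩, hg⟩ :=
    ContinuousMap.exists_mem_subalgebra_near_continuous_of_isCompact_of_separatesPoints
      hsep ⟨f, hf⟩ hK hε
  exact ⟨q, fun x hx => by simpa [hφ, abs_sub_comm] using hg x hx⟩

theorem Continuous.memLp_of_ae_mem_isCompact {α : Type*} [TopologicalSpace α]
    [MeasurableSpace α] [OpensMeasurableSpace α] {μ : Measure α} [IsFiniteMeasure μ]
    {f : α → ℝ} (hf : Continuous f) {K : Set α} (hK : IsCompact K) (hμK : ∀ᵐ x ∂μ, x ∈ K)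
    (p : ENNReal) : MemLp f p μ := by
  obtain ⟨C, hC⟩ := hK.exists_bound_of_continuousOn hf.continuousOn
  exact (memLp_top_of_bound hf.aestronglyMeasurable C (hμK.mono hC)).mono_exponent le_top

section Orthonormal

variable {α A : Type*} [MeasurableSpace α] {μ : Measure α} {I : Finset A} {P : A → α → ℝ}

theorem integral_mul_finsetSum {f : α → ℝ} (hf : MemLp f 2 μ) (hP : ∀ a ∈ I, MemLp (P a) 2 μ)
    (c : A → ℝ) :
    ∫ x, f x * ∑ a ∈ I, c a * P a x ∂μ = ∑ a ∈ I, c a * ∫ x, f x * P a x ∂μ := by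
  have hfP (a) (ha : a ∈ I) : Integrable (fun x => c a * (f x * P a x)) μ :=
    (hf.integrable_mul (hP a ha)).const_mul (c a)
  simp_rw [Finset.mul_sum, mul_left_comm (f _), integral_finsetSum I hfP, integral_const_mul]

variable [DecidableEq A]

theorem integral_finsetSum_sq_of_orthonormal (hP : ∀ a ∈ I, MemLp (P a) 2 μ)
    (horth : ∀ a ∈ I, ∀ b ∈ I, ∫ x, P a x * P b x ∂μ = if a = b then 1 else 0) (c : A → ℝ) :
    ∫ x, (∑ a ∈ I, c a * P a x) ^ 2 ∂μ = ∑ a ∈ I, c a ^ 2 := by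
  have hS : MemLp (fun x => ∑ a ∈ I, c a * P a x) 2 μ :=
    memLp_finsetSum I fun a ha => (hP a ha).const_mul (c a)
  have hSP (a) (ha : a ∈ I) : ∫ x, (∑ b ∈ I, c b * P b x) * P a x ∂μ = c a := by
    simp_rw [mul_comm _ (P a _), integral_mul_finsetSum (hP a ha) hP c]
    rw [Finset.sum_congr rfl fun b hb => by rw [horth a ha b hb]]
    simp [ha]
  simp_rw [sq, integral_mul_finsetSum hS hP c]
  exact Finset.sum_congr rfl fun a ha => by rw [hSP a ha]

theorem integral_sq_sub_finsetSum_of_orthonormal {f : α → ℝ} (hf : MemLp f 2 μ)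
    (hP : ∀ a ∈ I, MemLp (P a) 2 μ)
    (horth : ∀ a ∈ I, ∀ b ∈ I, ∫ x, P a x * P b x ∂μ = if a = b then 1 else 0) (c : A → ℝ) :
    ∫ x, (f x - ∑ a ∈ I, c a * P a x) ^ 2 ∂μ
      = ∫ x, f x ^ 2 ∂μ - 2 * ∑ a ∈ I, c a * ∫ x, f x * P a x ∂μ + ∑ a ∈ I, c a ^ 2 := by
  have hS : MemLp (fun x => ∑ a ∈ I, c a * P a x) 2 μ :=
    memLp_finsetSum I fun a ha => (hP a ha).const_mul (c a)
  have hfS : Integrable (fun x => 2 * (f x * ∑ a ∈ I, c a * P a x)) μ :=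
    (hf.integrable_mul hS).const_mul 2
  have hf2 : Integrable (fun x => f x ^ 2 - 2 * (f x * ∑ a ∈ I, c a * P a x)) μ :=
    hf.integrable_sq.sub hfS
  calc ∫ x, (f x - ∑ a ∈ I, c a * P a x) ^ 2 ∂μ
      = ∫ x, (f x ^ 2 - 2 * (f x * ∑ a ∈ I, c a * P a x) + (∑ a ∈ I, c a * P a x) ^ 2) ∂μ := by
        congr 1 with x; ring
    _ = _ := by
        rw [integral_add hf2 hS.integrable_sq, integral_sub hf.integrable_sq hfS,
          integral_const_mul, integral_mul_finsetSum hf hP,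
          integral_finsetSum_sq_of_orthonormal hP horth]

theorem integral_sq_sub_finsetSum_le_of_orthonormal {f : α → ℝ} (hf : MemLp f 2 μ)
    (hP : ∀ a ∈ I, MemLp (P a) 2 μ)
    (horth : ∀ a ∈ I, ∀ b ∈ I, ∫ x, P a x * P b x ∂μ = if a = b then 1 else 0) (c : A → ℝ) :
    ∫ x, (f x - ∑ a ∈ I, (∫ y, f y * P a y ∂μ) * P a x) ^ 2 ∂μ
      ≤ ∫ x, (f x - ∑ a ∈ I, c a * P a x) ^ 2 ∂μ := by
  rw [integral_sq_sub_finsetSum_of_orthonormal hf hP horth,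
    integral_sq_sub_finsetSum_of_orthonormal hf hP horth]
  have := Finset.sum_nonneg fun a (_ : a ∈ I) => sq_nonneg (c a - ∫ y, f y * P a y ∂μ)
  simp only [sub_sq, Finset.sum_add_distrib, Finset.sum_sub_distrib, mul_assoc,
    ← Finset.mul_sum] at this
  simp only [← sq]
  linarith

end Orthonormal

theorem tendsto_of_forall_eventually_abs_sub_le {β : Type*} {l : Filter β} {u : β → ℝ} {L C : ℝ}
    (h : ∀ ε > 0, ∀ᶠ n in l, |u n - L| ≤ C * ε) : Tendsto u l (nhds L) := by
  refine Metric.tendsto_nhds.2 fun ε hε => ?_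
  have hC : 0 < |C| + 1 := by positivity
  filter_upwards [h (ε / (|C| + 1)) (by positivity)] with n hn
  rw [Real.dist_eq]
  calc |u n - L| ≤ C * (ε / (|C| + 1)) := hn
    _ ≤ |C| * (ε / (|C| + 1)) := by gcongr; exact le_abs_self C
    _ < ε := by
      rw [← mul_div_assoc, div_lt_iff₀ hC]
      nlinarith

section WeightedSums

variable {β : Type*} {s : Finset β} {w : β → ℝ}

theorem abs_sum_mul_sub_sum_mul_le (hw : ∀ i ∈ s, 0 ≤ w i) (f g : β → ℝ) :
    |∑ i ∈ s, w i * f i - ∑ i ∈ s, w i * g i| ≤ ∑ i ∈ s, w i * |f i - g i| := by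
  rw [← Finset.sum_sub_distrib]
  refine (Finset.abs_sum_le_sum_abs _ _).trans (Finset.sum_le_sum fun i hi => ?_)
  rw [← mul_sub, abs_mul, abs_of_nonneg (hw i hi)]

theorem sum_mul_abs_le_of_sum_mul_sq_le (hw : ∀ i ∈ s, 0 ≤ w i) {u : β → ℝ} {δ : ℝ}
    (hδ : 0 < δ) (hu : ∑ i ∈ s, w i * u i ^ 2 ≤ δ ^ 2) :
    ∑ i ∈ s, w i * |u i| ≤ δ * (∑ i ∈ s, w i + 1) / 2 := by
  have hamgm : 2 * δ * ∑ i ∈ s, w i * |u i| ≤ δ ^ 2 * ∑ i ∈ s, w i + ∑ i ∈ s, w i * u i ^ 2 := by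
    rw [Finset.mul_sum, Finset.mul_sum, ← Finset.sum_add_distrib]
    refine Finset.sum_le_sum fun i hi => ?_
    nlinarith [two_mul_le_add_sq δ |u i|, hw i hi, sq_abs (u i)]
  rw [le_div_iff₀ two_pos]
  nlinarith

end WeightedSums

section L2

variable {α : Type*} [MeasurableSpace α] {μ : Measure α}

theorem integral_abs_le_of_integral_sq_le [IsFiniteMeasure μ] {u : α → ℝ} (hu : MemLp u 2 μ)
    {δ : ℝ} (hδ : 0 < δ) (h : ∫ x, u x ^ 2 ∂μ ≤ δ ^ 2) :
    ∫ x, |u x| ∂μ ≤ δ * (μ.real Set.univ + 1) / 2 := by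
  have hamgm : 2 * δ * ∫ x, |u x| ∂μ ≤ δ ^ 2 * μ.real Set.univ + ∫ x, u x ^ 2 ∂μ := by
    calc 2 * δ * ∫ x, |u x| ∂μ = ∫ x, 2 * δ * |u x| ∂μ := (integral_const_mul _ _).symm
      _ ≤ ∫ x, (δ ^ 2 + u x ^ 2) ∂μ :=
        integral_mono ((hu.integrable one_le_two).abs.const_mul _)
          ((integrable_const _).add hu.integrable_sq) fun x =>
            by nlinarith [two_mul_le_add_sq δ |u x|, sq_abs (u x)]
      _ = δ ^ 2 * μ.real Set.univ + ∫ x, u x ^ 2 ∂μ := by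
        rw [integral_add (integrable_const _) hu.integrable_sq, integral_const, smul_eq_mul,
          mul_comm]
  rw [le_div_iff₀ two_pos]
  nlinarith

theorem integral_sq_sub_le {f g k : α → ℝ} (hf : MemLp f 2 μ) (hg : MemLp g 2 μ)
    (hk : MemLp k 2 μ) :
    ∫ x, (f x - g x) ^ 2 ∂μ ≤ 2 * ∫ x, (f x - k x) ^ 2 ∂μ + 2 * ∫ x, (k x - g x) ^ 2 ∂μ := by
  have hfk : Integrable (fun x => 2 * (f x - k x) ^ 2) μ := (hf.sub hk).integrable_sq.const_mul 2
  have hkg : Integrable (fun x => 2 * (k x - g x) ^ 2) μ := (hk.sub hg).integrable_sq.const_mul 2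
  rw [← integral_const_mul, ← integral_const_mul, ← integral_add hfk hkg]
  refine integral_mono (hf.sub hg).integrable_sq (hfk.add hkg) fun x => ?_
  nlinarith [sq_nonneg (f x - 2 * k x + g x)]

theorem abs_integral_abs_sub_integral_abs_le {f g : α → ℝ} (hf : Integrable f μ)
    (hg : Integrable g μ) :
    |∫ x, |f x| ∂μ - ∫ x, |g x| ∂μ| ≤ ∫ x, |f x - g x| ∂μ := by
  rw [← integral_sub hf.abs hg.abs]
  calc |∫ x, (|f x| - |g x|) ∂μ| ≤ ∫ x, |(|f x| - |g x|)| ∂μ := by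
        simpa only [Real.norm_eq_abs] using norm_integral_le_integral_norm fun x => |f x| - |g x|
    _ ≤ ∫ x, |f x - g x| ∂μ := integral_mono (hf.abs.sub hg.abs).abs (hf.sub hg).abs
        fun x => abs_abs_sub_abs_le_abs_sub _ _

end L2

theorem MvPolynomial.exists_integral_sq_sub_le {ι : Type*} [Fintype ι] {Ω : Set (ι → ℝ)}
    (hΩ : IsCompact Ω) {μ : Measure (ι → ℝ)} [IsFiniteMeasure μ] (hμΩ : ∀ᵐ x ∂μ, x ∈ Ω)
    {h : (ι → ℝ) → ℝ} (hh : MemLp h 2 μ) {ε : ℝ} (hε : 0 < ε) :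
    ∃ q : MvPolynomial ι ℝ, ∫ x, (h x - eval x q) ^ 2 ∂μ ≤ ε := by
  obtain ⟨g, hhg, hg⟩ := (show MemLp h (ENNReal.ofReal 2) μ by simpa using hh)
    |>.exists_boundedContinuous_integral_rpow_sub_le two_pos (by positivity : 0 < ε / 4)
  rw [ENNReal.ofReal_ofNat] at hg
  simp only [Real.rpow_two, Real.norm_eq_abs, sq_abs] at hhg
  obtain ⟨c, hc, hcM⟩ := exists_pos_mul_lt (by positivity : 0 < ε / 4) (μ.real Set.univ)
  obtain ⟨q, hq⟩ := exists_forall_abs_sub_lt_of_isCompact hΩ g.continuous (Real.sqrt_pos.2 hc)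
  have hgq : ∫ x, (g x - eval x q) ^ 2 ∂μ ≤ c * μ.real Set.univ := by
    refine (Real.norm_eq_abs _ ▸ le_abs_self _).trans (norm_integral_le_of_norm_le_const ?_)
    filter_upwards [hμΩ] with x hx
    rw [Real.norm_eq_abs, abs_sq, ← sq_abs]
    exact ((Real.lt_sqrt (abs_nonneg _)).1 (hq x hx)).le
  refine ⟨q, (integral_sq_sub_le hh ((continuous_eval q).memLp_of_ae_mem_isCompact hΩ hμΩ 2)
    hg).trans ?_⟩
  nlinarith

variable {ι : Type*}

def IsCubatureOfDegree (μ : Measure (ι → ℝ)) (X : Finset (ι → ℝ)) (w : (ι → ℝ) → ℝ) (k : ℕ) :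
    Prop :=
  ∀ q : MvPolynomial ι ℝ, q.totalDegree ≤ k → ∑ ξ ∈ X, w ξ * eval ξ q = ∫ x, eval x q ∂μ

theorem IsCubatureOfDegree.sum_weights {μ : Measure (ι → ℝ)} {X : Finset (ι → ℝ)}
    {w : (ι → ℝ) → ℝ} {k : ℕ} (hX : IsCubatureOfDegree μ X w k) :
    ∑ ξ ∈ X, w ξ = μ.real Set.univ := by
  simpa using hX 1 (by simp)

section Cubature

variable [Fintype ι] {Ω : Set (ι → ℝ)} {μ : Measure (ι → ℝ)} [IsFiniteMeasure μ]

theorem tendsto_sum_mul_of_isCubatureOfDegree (hΩ : IsCompact Ω) (hμΩ : ∀ᵐ x ∂μ, x ∈ Ω)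
    {X : ℕ → Finset (ι → ℝ)} (hXΩ : ∀ n, ∀ ξ ∈ X n, ξ ∈ Ω) {w : ℕ → (ι → ℝ) → ℝ}
    (hw : ∀ n, ∀ ξ ∈ X n, 0 ≤ w n ξ) {k : ℕ → ℕ} (hk : Tendsto k atTop atTop)
    (hX : ∀ n, IsCubatureOfDegree μ (X n) (w n) (k n)) {f : (ι → ℝ) → ℝ} (hf : Continuous f) :
    Tendsto (fun n => ∑ ξ ∈ X n, w n ξ * f ξ) atTop (nhds (∫ x, f x ∂μ)) := by
  refine tendsto_of_forall_eventually_abs_sub_le (C := 2 * μ.real Set.univ) fun ε hε => ?_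
  obtain ⟨R, hR⟩ := exists_forall_abs_sub_lt_of_isCompact hΩ hf hε
  filter_upwards [hk.eventually_ge_atTop R.totalDegree] with n hn
  have hsum : |∑ ξ ∈ X n, w n ξ * f ξ - ∫ x, eval x R ∂μ| ≤ ε * μ.real Set.univ := by
    rw [← hX n R hn, ← (hX n).sum_weights, Finset.mul_sum]
    refine (abs_sum_mul_sub_sum_mul_le (hw n) _ _).trans (Finset.sum_le_sum fun ξ hξ => ?_)
    rw [mul_comm ε]
    exact mul_le_mul_of_nonneg_left (hR ξ (hXΩ n ξ hξ)).le (hw n ξ hξ)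
  have hint : |∫ x, eval x R ∂μ - ∫ x, f x ∂μ| ≤ ε * μ.real Set.univ := by
    rw [← integral_sub
      (memLp_one_iff_integrable.1 ((continuous_eval R).memLp_of_ae_mem_isCompact hΩ hμΩ 1))
      (memLp_one_iff_integrable.1 (hf.memLp_of_ae_mem_isCompact hΩ hμΩ 1))]
    have hRf : ∀ᵐ x ∂μ, ‖eval x R - f x‖ ≤ ε := hμΩ.mono fun x hx => by
      rw [Real.norm_eq_abs, abs_sub_comm]
      exact (hR x hx).le
    simpa only [Real.norm_eq_abs] using norm_integral_le_of_norm_le_const hRf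
  linarith [abs_sub_le (∑ ξ ∈ X n, w n ξ * f ξ) (∫ x, eval x R ∂μ) (∫ x, f x ∂μ)]

theorem abs_sum_mul_abs_sub_integral_abs_le (hΩ : IsCompact Ω) (hμΩ : ∀ᵐ x ∂μ, x ∈ Ω)
    {X : Finset (ι → ℝ)} {w : (ι → ℝ) → ℝ} (hw : ∀ ξ ∈ X, 0 ≤ w ξ) {n : ℕ}
    (hX : IsCubatureOfDegree μ X w (2 * n)) {h : (ι → ℝ) → ℝ} (hh : MemLp h 2 μ)
    {P Q : MvPolynomial ι ℝ} (hP : P.totalDegree ≤ n) (hQ : Q.totalDegree ≤ n)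
    (hPQ : ∫ x, (h x - eval x P) ^ 2 ∂μ ≤ ∫ x, (h x - eval x Q) ^ 2 ∂μ) {δ : ℝ} (hδ : 0 < δ)
    (hQδ : ∫ x, (h x - eval x Q) ^ 2 ∂μ ≤ δ ^ 2) :
    |∑ ξ ∈ X, w ξ * |eval ξ P| - ∫ x, |h x| ∂μ|
      ≤ |∑ ξ ∈ X, w ξ * |eval ξ Q| - ∫ x, |eval x Q| ∂μ| + δ * (3 * μ.real Set.univ + 3) / 2 := by
  have hpoly (q : MvPolynomial ι ℝ) := (continuous_eval q).memLp_of_ae_mem_isCompact hΩ hμΩ 2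
  have hPQ2 : ∫ x, (eval x P - eval x Q) ^ 2 ∂μ ≤ (2 * δ) ^ 2 := by
    have := integral_sq_sub_le (hpoly P) (hpoly Q) hh
    simp_rw [sub_sq_comm (eval _ P) (h _)] at this
    nlinarith
  have hnodes : ∑ ξ ∈ X, w ξ * (eval ξ P - eval ξ Q) ^ 2 = ∫ x, (eval x P - eval x Q) ^ 2 ∂μ := by
    have hdeg : ((P - Q) ^ 2).totalDegree ≤ 2 * n :=
      (totalDegree_pow _ _).trans (by grind [totalDegree_sub P Q])
    simpa using hX _ hdeg
  have hT1 := sum_mul_abs_le_of_sum_mul_sq_le hw (by positivity) (hnodes ▸ hPQ2)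
  have hT3 : ∫ x, |h x - eval x Q| ∂μ ≤ _ :=
    integral_abs_le_of_integral_sq_le (hh.sub (hpoly Q)) hδ hQδ
  have hint : |∫ x, |eval x Q| ∂μ - ∫ x, |h x| ∂μ| ≤ ∫ x, |h x - eval x Q| ∂μ := by
    simpa only [abs_sub_comm (h _)] using abs_integral_abs_sub_integral_abs_le
      ((hpoly Q).integrable one_le_two) (hh.integrable one_le_two)
  rw [hX.sum_weights] at hT1
  linarith [abs_sub_le (∑ ξ ∈ X, w ξ * |eval ξ P|) (∑ ξ ∈ X, w ξ * |eval ξ Q|) (∫ x, |h x| ∂μ),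
    abs_sub_le (∑ ξ ∈ X, w ξ * |eval ξ Q|) (∫ x, |eval x Q| ∂μ) (∫ x, |h x| ∂μ),
    (abs_sum_mul_sub_sum_mul_le hw _ _).trans (Finset.sum_le_sum fun ξ hξ =>
      mul_le_mul_of_nonneg_left (abs_abs_sub_abs_le_abs_sub (eval ξ P) (eval ξ Q)) (hw ξ hξ))]

theorem tendsto_sum_mul_abs_of_isBestApprox (hΩ : IsCompact Ω) (hμΩ : ∀ᵐ x ∂μ, x ∈ Ω)
    {X : ℕ → Finset (ι → ℝ)} (hXΩ : ∀ n, ∀ ξ ∈ X n, ξ ∈ Ω) {w : ℕ → (ι → ℝ) → ℝ}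
    (hw : ∀ n, ∀ ξ ∈ X n, 0 ≤ w n ξ) (hX : ∀ n, IsCubatureOfDegree μ (X n) (w n) (2 * n))
    {h : (ι → ℝ) → ℝ} (hh : MemLp h 2 μ) {P : ℕ → MvPolynomial ι ℝ}
    (hP : ∀ n, (P n).totalDegree ≤ n)
    (hPbest : ∀ n, ∀ q : MvPolynomial ι ℝ, q.totalDegree ≤ n →
      ∫ x, (h x - eval x (P n)) ^ 2 ∂μ ≤ ∫ x, (h x - eval x q) ^ 2 ∂μ) :
    Tendsto (fun n => ∑ ξ ∈ X n, w n ξ * |eval ξ (P n)|) atTop (nhds (∫ x, |h x| ∂μ)) := by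
  refine tendsto_of_forall_eventually_abs_sub_le
    (C := (3 * μ.real Set.univ + 5) / 2) fun δ hδ => ?_
  obtain ⟨Q, hQ⟩ := exists_integral_sq_sub_le hΩ hμΩ hh (pow_pos hδ 2)
  have hQnodes := tendsto_sum_mul_of_isCubatureOfDegree hΩ hμΩ hXΩ hw
    (tendsto_id.const_mul_atTop' two_pos) hX (continuous_eval Q).abs
  filter_upwards [eventually_ge_atTop Q.totalDegree,
    hQnodes.eventually (Metric.closedBall_mem_nhds _ hδ)] with n hn hQn
  rw [Real.dist_eq] at hQn
  have := abs_sum_mul_abs_sub_integral_abs_le hΩ hμΩ (hw n) (hX n) hh (hP n) hn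
    (hPbest n Q hn) hδ hQ
  linarith

end Cubature

theorem sum_abs_weights_tendsto (d : ℕ)
    (Ω : Set (Fin d → ℝ)) (hΩ : IsCompact Ω)
    (μ : Measure (Fin d → ℝ)) [IsFiniteMeasure μ] (hμΩ : μ Ωᶜ = 0)
    (p : (Fin d → ℕ) → MvPolynomial (Fin d) ℝ)
    (hdeg : ∀ α, (p α).totalDegree = ∑ i, α i)
    (horth : ∀ α β, ∫ x, MvPolynomial.eval x (p α) * MvPolynomial.eval x (p β) ∂μ =
      if α = β then 1 else 0)
    (hspan : ∀ n : ℕ, ∀ q : MvPolynomial (Fin d) ℝ, q.totalDegree ≤ n →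
      ∃ c : (Fin d → ℕ) → ℝ, ∀ x ∈ Ω,
        MvPolynomial.eval x q = ∑ α ∈ idxd d n, c α * MvPolynomial.eval x (p α))
    (X : ℕ → Finset (Fin d → ℝ)) (hXΩ : ∀ n, ∀ ξ ∈ X n, ξ ∈ Ω)
    (w : ℕ → (Fin d → ℝ) → ℝ) (hw : ∀ n, ∀ ξ ∈ X n, 0 < w n ξ)
    (hexact : ∀ n : ℕ, ∀ q : MvPolynomial (Fin d) ℝ, q.totalDegree ≤ 2 * n →
      ∑ ξ ∈ X n, w n ξ * MvPolynomial.eval ξ q = ∫ x, MvPolynomial.eval x q ∂μ)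
    (h : (Fin d → ℝ) → ℝ) (hh : MemLp h 2 μ) :
    Tendsto (fun n : ℕ =>
        ∑ ξ ∈ X n, |w n ξ * ∑ α ∈ idxd d n,
          MvPolynomial.eval ξ (p α) * ∫ x, h x * MvPolynomial.eval x (p α) ∂μ|)
      atTop (nhds (∫ x, |h x| ∂μ)) := by
  have hμΩ' : ∀ᵐ x ∂μ, x ∈ Ω := mem_ae_iff.2 hμΩ
  set m : (Fin d → ℕ) → ℝ := fun α => ∫ x, h x * eval x (p α) ∂μ
  set P : ℕ → MvPolynomial (Fin d) ℝ := fun n => ∑ α ∈ idxd d n, C (m α) * p α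
  have hevalP (n : ℕ) (x : Fin d → ℝ) : eval x (P n) = ∑ α ∈ idxd d n, m α * eval x (p α) := by
    simp [P]
  have hP (n : ℕ) : (P n).totalDegree ≤ n := by
    refine (totalDegree_finsetSum _ _).trans (Finset.sup_le fun α hα => ?_)
    refine (totalDegree_mul _ _).trans ?_
    simpa [hdeg] using (Finset.mem_filter.1 hα).2
  have hPbest (n : ℕ) (q : MvPolynomial (Fin d) ℝ) (hq : q.totalDegree ≤ n) :
      ∫ x, (h x - eval x (P n)) ^ 2 ∂μ ≤ ∫ x, (h x - eval x q) ^ 2 ∂μ := by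
    obtain ⟨c, hc⟩ := hspan n q hq
    have hq' : ∫ x, (h x - eval x q) ^ 2 ∂μ
        = ∫ x, (h x - ∑ α ∈ idxd d n, c α * eval x (p α)) ^ 2 ∂μ :=
      integral_congr_ae (hμΩ'.mono fun x hx => by simp only [hc x hx])
    simp_rw [hq', hevalP]
    exact integral_sq_sub_finsetSum_le_of_orthonormal hh
      (fun α _ => (continuous_eval (p α)).memLp_of_ae_mem_isCompact hΩ hμΩ' 2)
      (fun α _ β _ => horth α β) c
  refine (tendsto_sum_mul_abs_of_isBestApprox hΩ hμΩ' hXΩ (fun n ξ hξ => (hw n ξ hξ).le)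
    hexact hh hP hPbest).congr fun n => Finset.sum_congr rfl fun ξ hξ => ?_
  rw [abs_mul, abs_of_pos (hw n ξ hξ), hevalP]
  simp_rw [mul_comm (m _)]
  rfl
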